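/- Closedness of terms is transitive: if a term t is closed with respect to a finite set of expressions T₁, and every expression in T₁ is closed with respect to T₂, then t is closed with respect to T₂. -/

import Mathlib

/-- Expressions: variables, constructor calls, function calls, and case
expressions (flexible or rigid) with an argument expression and branches
consisting of a flat pattern `c(x₁,...,xₙ)` and a body. -/
inductive Expr where
  | var : ℕ → Expr
  | cons : ℕ → List Expr → Expr
  | fn : ℕ → List Expr → Expr
  | case : Bool → Expr → List ((ℕ × List ℕ) × Expr) → Expr

/-- Application of a substitution to an expression. -/
def subst (σ : ℕ → Expr) : Expr → Expr
  | .var x => σ x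
  | .cons c ts => .cons c (ts.attach.map (fun t => subst σ t.1))
  | .fn f ts => .fn f (ts.attach.map (fun t => subst σ t.1))
  | .case fl a bs => .case fl (subst σ a) (bs.attach.map (fun b => (b.1.1, subst σ b.1.2)))
decreasing_by
  · have := List.sizeOf_lt_of_mem t.2
    simp only [Expr.cons.sizeOf_spec]; omega
  · have := List.sizeOf_lt_of_mem t.2
    simp only [Expr.fn.sizeOf_spec]; omega
  · simp only [Expr.case.sizeOf_spec]; omega
  · have h1 := List.sizeOf_lt_of_mem b.2
    have h2 : sizeOf b.1.2 < sizeOf b.1 := by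
      obtain ⟨⟨p, e⟩, hb⟩ := b; simp
    simp only [Expr.case.sizeOf_spec]; omega

/-- `Closed E e`: the expression `e` is closed w.r.t. the finite set `E`:
`e` is a variable; or a constructor call with `E`-closed arguments; or a
case expression whose argument and branch bodies are `E`-closed; or `e` is
operation-rooted and is an instance `σ(e')` of some `e' ∈ E` such that every
expression in the range of `σ` is recursively `E`-closed. -/
inductive Closed (E : Finset Expr) : Expr → Prop
  | var (x : ℕ) : Closed E (.var x)
  | cons {c : ℕ} {ts : List Expr} (h : ∀ t ∈ ts, Closed E t) :
      Closed E (.cons c ts)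
  | case {fl : Bool} {a : Expr} {bs : List ((ℕ × List ℕ) × Expr)}
      (ha : Closed E a) (hbs : ∀ b ∈ bs, Closed E b.2) :
      Closed E (.case fl a bs)
  | op {f : ℕ} {ts : List Expr} {e' : Expr} {σ : ℕ → Expr}
      (hE : e' ∈ E) (hinst : subst σ e' = .fn f ts)
      (hσ : ∀ x, Closed E (σ x)) :
      Closed E (.fn f ts)

theorem subst_var (σ : ℕ → Expr) (x) : subst σ (.var x) = σ x := by rw [subst]

theorem subst_cons (σ : ℕ → Expr) (c ts) :
    subst σ (.cons c ts) = .cons c (ts.map (subst σ)) := by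
  rw [subst]; simp [List.attach_map_val]

theorem subst_fn (σ : ℕ → Expr) (f ts) :
    subst σ (.fn f ts) = .fn f (ts.map (subst σ)) := by
  rw [subst]; simp [List.attach_map_val]

theorem subst_case (σ : ℕ → Expr) (fl a bs) :
    subst σ (.case fl a bs) = .case fl (subst σ a) (bs.map (fun b => (b.1, subst σ b.2))) := by
  rw [subst]; simp [List.attach_map_val (f := fun b : (ℕ × List ℕ) × Expr => (b.1, subst σ b.2))]

theorem subst_subst (σ τ : ℕ → Expr) (e : Expr) :
    subst σ (subst τ e) = subst (fun x => subst σ (τ x)) e := by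
  induction e using subst.induct with
  | case1 x => simp [subst]
  | case2 c ts ih =>
    simp only [subst_cons, List.map_map]
    congr 1
    exact List.map_congr_left (fun t ht => ih ⟨t, ht⟩)
  | case3 f ts ih =>
    simp only [subst_fn, List.map_map]
    congr 1
    exact List.map_congr_left (fun t ht => ih ⟨t, ht⟩)
  | case4 fl a bs iha ihbs =>
    simp only [subst_case, List.map_map]
    refine congrArg₂ _ iha ?_
    refine List.map_congr_left ?_
    intro b hb; simp [ihbs ⟨b, hb⟩]

theorem closed_subst {E : Finset Expr} {σ : ℕ → Expr} {e : Expr}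
    (he : Closed E e) (hσ : ∀ x, Closed E (σ x)) : Closed E (subst σ e) := by
  induction he with
  | var x => rw [subst_var]; exact hσ x
  | cons h ih =>
    rw [subst_cons]
    exact Closed.cons (by simpa using ih)
  | case ha hbs iha ihbs =>
    rw [subst_case]
    refine Closed.case iha ?_
    intro b hb
    simp only [List.mem_map] at hb
    obtain ⟨b', hb', rfl⟩ := hb
    exact ihbs b' hb'
  | @op f ts e' τ hE hinst hτ ihτ =>
    rw [subst_fn]
    refine Closed.op hE ?_ ihτ
    rw [← subst_subst, hinst, subst_fn]

/-- Closedness of terms is transitive: if `t` is closed w.r.t. a finite set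
`T₁`, and every expression in `T₁` is closed w.r.t. `T₂`, then `t` is closed
w.r.t. `T₂`. -/
theorem closed_trans (T₁ T₂ : Finset Expr) (t : Expr)
    (h1 : Closed T₁ t) (h2 : ∀ u ∈ T₁, Closed T₂ u) : Closed T₂ t := by
  induction h1 with
  | var x => exact .var x
  | cons h ih => exact .cons ih
  | case ha hbs iha ihbs => exact .case iha ihbs
  | @op f ts e' σ hE hinst hσ ihσ =>
    have := closed_subst (h2 e' hE) ihσ
    rwa [hinst] at this
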